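/- Let φ be an admissible function. Then there is a constant C (depending only on φ) such that for every y ≥ 1, sup over x ∈ [1,∞) of φ(x)·e^{−x/y} is at most C·φ(y). -/

import Mathlib

/-!
Since `(log φ)' ≤ β / x`, the function `log φ x - β log x` is antitone, so `φ x ≤ φ y (x / y) ^ β`
for `x ≥ y`; and `φ' > 0` makes `φ` monotone. For `x ≤ y` this bounds `φ x e^{-x/y}` by `φ y`, and
for `x ≥ y` by `φ y · t ^ β e^{-t}` with `t = x / y ≥ 1`, which is at most `⌈β⌉₊! φ y` because
`t ^ n ≤ n! e^t`. Differentiability of `φ` is not assumed: it follows from `φ' / φ ≥ γ / x > 0`,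
since `deriv` is `0` at points of non-differentiability.
-/

open Real Set

theorem rpow_mul_exp_neg_le_factorial {t : ℝ} (ht : 1 ≤ t) (β : ℝ) :
    t ^ β * exp (-t) ≤ ((⌈β⌉₊).factorial : ℝ) := by
  have hpow : t ^ β ≤ t ^ ⌈β⌉₊ := by
    rw [← rpow_natCast]
    exact rpow_le_rpow_of_exponent_le ht (Nat.le_ceil β)
  have hexp : t ^ ⌈β⌉₊ ≤ (⌈β⌉₊).factorial * exp t := by
    have := Real.pow_div_factorial_le_exp t (by linarith) ⌈β⌉₊
    rwa [div_le_iff₀ (by positivity), mul_comm] at this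
  calc t ^ β * exp (-t) ≤ (⌈β⌉₊).factorial * exp t * exp (-t) := by gcongr; exact hpow.trans hexp
    _ = (⌈β⌉₊).factorial := by rw [mul_assoc, ← exp_add, add_neg_cancel, exp_zero, mul_one]

section LogDerivBound

variable {f : ℝ → ℝ} {a β : ℝ}

theorem antitoneOn_log_sub_mul_log_of_logDeriv_le (ha : 0 < a)
    (hpos : ∀ x, a ≤ x → 0 < f x) (hdiff : ∀ x, a ≤ x → DifferentiableAt ℝ f x)
    (hder : ∀ x, a ≤ x → logDeriv f x ≤ β / x) :
    AntitoneOn (fun x => log (f x) - β * log x) (Ici a) := by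
  have hderiv : ∀ x, a ≤ x →
      HasDerivAt (fun x => log (f x) - β * log x) (logDeriv f x - β / x) x := by
    intro x hx
    rw [logDeriv_apply, div_eq_mul_inv β]
    exact ((hdiff x hx).hasDerivAt.log (hpos x hx).ne').sub
      ((hasDerivAt_log (ha.trans_le hx).ne').const_mul β)
  apply antitoneOn_of_deriv_nonpos (convex_Ici a)
  · exact fun x hx => (hderiv x hx).continuousAt.continuousWithinAt
  · rw [interior_Ici]
    exact fun x hx => (hderiv x (le_of_lt hx)).differentiableAt.differentiableWithinAt
  · rw [interior_Ici]
    intro x hx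
    rw [(hderiv x (le_of_lt hx)).deriv, sub_nonpos]
    exact hder x (le_of_lt hx)

theorem le_mul_div_rpow_of_logDeriv_le (ha : 0 < a)
    (hpos : ∀ x, a ≤ x → 0 < f x) (hdiff : ∀ x, a ≤ x → DifferentiableAt ℝ f x)
    (hder : ∀ x, a ≤ x → logDeriv f x ≤ β / x) {x y : ℝ} (hy : a ≤ y) (hyx : y ≤ x) :
    f x ≤ f y * (x / y) ^ β := by
  have hy0 : 0 < y := ha.trans_le hy
  have hx0 : 0 < x := hy0.trans_le hyx
  have hlog : log (f x) - β * log x ≤ log (f y) - β * log y :=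
    antitoneOn_log_sub_mul_log_of_logDeriv_le ha hpos hdiff hder hy (hy.trans hyx) hyx
  rw [← log_le_log_iff (hpos x (hy.trans hyx)) (by positivity [hpos y hy]),
    log_mul (hpos y hy).ne' (by positivity), log_rpow (by positivity), log_div hx0.ne' hy0.ne']
  linarith

theorem mul_exp_neg_div_le_factorial_mul (ha : 0 < a) (hpos : ∀ x, a ≤ x → 0 < f x)
    (hmono : MonotoneOn f (Ici a))
    (hgrowth : ∀ x y, a ≤ y → y ≤ x → f x ≤ f y * (x / y) ^ β)
    {x y : ℝ} (hx : a ≤ x) (hy : a ≤ y) :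
    f x * exp (-x / y) ≤ (⌈β⌉₊).factorial * f y := by
  have hy0 : 0 < y := ha.trans_le hy
  rcases le_total x y with hxy | hyx
  · have hexp : exp (-x / y) ≤ 1 :=
      exp_le_one_iff.mpr (div_nonpos_of_nonpos_of_nonneg (by linarith [ha.trans_le hx]) hy0.le)
    have hfac : (1 : ℝ) ≤ (⌈β⌉₊).factorial := by exact_mod_cast Nat.factorial_pos _
    calc f x * exp (-x / y) ≤ f y * 1 :=
          mul_le_mul (hmono hx hy hxy) hexp (exp_pos _).le (hpos y hy).le
      _ ≤ (⌈β⌉₊).factorial * f y := by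
          rw [mul_one]; exact le_mul_of_one_le_left (hpos y hy).le hfac
  · calc f x * exp (-x / y) ≤ f y * (x / y) ^ β * exp (-(x / y)) := by
          rw [neg_div]; gcongr; exact hgrowth x y hy hyx
      _ = f y * ((x / y) ^ β * exp (-(x / y))) := mul_assoc _ _ _
      _ ≤ f y * (⌈β⌉₊).factorial := by
          gcongr
          · exact (hpos y hy).le
          · exact rpow_mul_exp_neg_le_factorial ((one_le_div hy0).mpr hyx) β
      _ = (⌈β⌉₊).factorial * f y := mul_comm _ _

end LogDerivBound

theorem stmt8_general (φ : ℝ → ℝ) (γ β : ℝ) (hγ : 0 < γ)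
    (hmap : ∀ x : ℝ, 1 ≤ x → 1 ≤ φ x)
    (hder : ∀ x : ℝ, 1 ≤ x → γ / x ≤ deriv φ x / φ x ∧ deriv φ x / φ x ≤ β / x) :
    ∃ C : ℝ, 0 < C ∧ ∀ y : ℝ, 1 ≤ y →
      sSup ((fun x => φ x * Real.exp (-x / y)) '' Set.Ici 1) ≤ C * φ y := by
  have hpos : ∀ x, 1 ≤ x → 0 < φ x := fun x hx => one_pos.trans_le (hmap x hx)
  have hderiv_pos : ∀ x, 1 ≤ x → 0 < deriv φ x := fun x hx =>
    (div_pos_iff_of_pos_right (hpos x hx)).mp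
      ((div_pos hγ (one_pos.trans_le hx)).trans_le (hder x hx).1)
  have hdiff : ∀ x, 1 ≤ x → DifferentiableAt ℝ φ x := fun x hx =>
    differentiableAt_of_deriv_ne_zero (hderiv_pos x hx).ne'
  have hmono : MonotoneOn φ (Ici 1) := by
    apply monotoneOn_of_deriv_nonneg (convex_Ici 1)
    · exact fun x hx => (hdiff x hx).continuousAt.continuousWithinAt
    · rw [interior_Ici]
      exact fun x hx => (hdiff x (le_of_lt hx)).differentiableWithinAt
    · rw [interior_Ici]
      exact fun x hx => (hderiv_pos x (le_of_lt hx)).le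
  have hgrowth : ∀ x y, 1 ≤ y → y ≤ x → φ x ≤ φ y * (x / y) ^ β := fun x y =>
    le_mul_div_rpow_of_logDeriv_le one_pos hpos hdiff fun x hx => (hder x hx).2
  refine ⟨(⌈β⌉₊).factorial, by positivity, fun y hy => Real.sSup_le ?_ (by positivity [hpos y hy])⟩
  rintro _ ⟨x, hx, rfl⟩
  exact mul_exp_neg_div_le_factorial_mul one_pos hpos hmono hgrowth hx hy

theorem stmt8 (φ : ℝ → ℝ) (γ β : ℝ) (hγ : 0 < γ) (hβ : 0 < β)
    (hmap : ∀ x : ℝ, 1 ≤ x → 1 ≤ φ x)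
    (hφ1 : φ 1 = 1)
    (hconc : ConcaveOn ℝ (Set.Ici (1 : ℝ)) (fun x => Real.log (φ x)))
    (hder : ∀ x : ℝ, 1 ≤ x → γ / x ≤ deriv φ x / φ x ∧ deriv φ x / φ x ≤ β / x) :
    ∃ C : ℝ, 0 < C ∧ ∀ y : ℝ, 1 ≤ y →
      sSup ((fun x => φ x * Real.exp (-x / y)) '' Set.Ici 1) ≤ C * φ y :=
  stmt8_general φ γ β hγ hmap hder
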